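/- arXiv:2601.19703 — 5 statements merged into one kernel-verified Lean document; each statement's English description precedes it below -/
import Mathlib

section
/- Let H be a complex Hilbert space, let {P_j}_{j=1}^{m} be a finite complete family of orthogonal projections on H, and let Q be an orthogonal projection on H. Suppose that for every vector ψ ∈ H and all indices j ≠ ℓ one has ⟨Q P_j ψ, Q P_ℓ ψ⟩ = 0 (i.e. the two-time decoherent histories condition ⟨ψ, P_j Q P_ℓ ψ⟩ = 0 holds for all initial states ψ). Then Q commutes with every P_j: [P_j, Q] = 0 for all j. -/
/-!
The hypothesis says that the quadratic form `ψ ↦ ⟪ψ, P j Q P ℓ ψ⟫` vanishes identically for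
`j ≠ ℓ`; on a complex space this forces `P j Q P ℓ = 0`. Expanding `P j Q` and `Q P j` with
`∑ ℓ, P ℓ = 1`, only the diagonal term `P j Q P j` survives in both, so they are equal.
-/

open Finset

section Ring

variable {R ι : Type*} [Ring R] [Fintype ι]

theorem mul_eq_mul_mul_of_sum_eq_one {P : ι → R} (hsum : ∑ ℓ, P ℓ = 1) {T : R} (j : ι)
    (hoff : ∀ ℓ, ℓ ≠ j → P j * T * P ℓ = 0) : P j * T = P j * T * P j := by
  calc P j * T = P j * T * ∑ ℓ, P ℓ := by rw [hsum, mul_one]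
    _ = P j * T * P j := by
      rw [mul_sum, sum_eq_single_of_mem j (mem_univ j) fun ℓ _ hℓ => hoff ℓ hℓ]

theorem mul_mul_eq_mul_of_sum_eq_one {P : ι → R} (hsum : ∑ ℓ, P ℓ = 1) {T : R} (j : ι)
    (hoff : ∀ ℓ, ℓ ≠ j → P ℓ * T * P j = 0) : T * P j = P j * T * P j := by
  calc T * P j = (∑ ℓ, P ℓ) * T * P j := by rw [hsum, one_mul]
    _ = P j * T * P j := by
      rw [sum_mul, sum_mul, sum_eq_single_of_mem j (mem_univ j) fun ℓ _ hℓ => hoff ℓ hℓ]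

theorem commute_of_sum_eq_one_of_mul_mul_eq_zero {P : ι → R} (hsum : ∑ ℓ, P ℓ = 1) {T : R}
    (hoff : ∀ j ℓ, j ≠ ℓ → P j * T * P ℓ = 0) (j : ι) : Commute (P j) T :=
  (mul_eq_mul_mul_of_sum_eq_one hsum j fun ℓ hℓ => hoff j ℓ hℓ.symm).trans
    (mul_mul_eq_mul_of_sum_eq_one hsum j fun ℓ hℓ => hoff ℓ j hℓ).symm

end Ring

section InnerProduct

variable {H : Type*} [NormedAddCommGroup H] [InnerProductSpace ℂ H] [CompleteSpace H]

theorem IsStarProjection.inner_map_map {Q : H →L[ℂ] H} (hQ : IsStarProjection Q) (x y : H) :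
    inner ℂ (Q x) (Q y) = inner ℂ (Q x) y := by
  have hsymm : inner ℂ (Q (Q x)) y = inner ℂ (Q x) (Q y) := hQ.isSelfAdjoint.isSymmetric (Q x) y
  rw [← hsymm]
  exact congrArg (inner ℂ · y) (ContinuousLinearMap.ext_iff.mp hQ.isIdempotentElem x)

theorem mul_mul_eq_zero_of_inner_map_map_eq_zero {A B Q : H →L[ℂ] H} (hA : IsSelfAdjoint A)
    (hQ : IsStarProjection Q) (h : ∀ ψ, inner ℂ (Q (A ψ)) (Q (B ψ)) = 0) : A * Q * B = 0 := by
  have hdiag : ∀ ψ, inner ℂ ((A * Q * B) ψ) ψ = 0 := fun ψ => by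
    calc inner ℂ ((A * Q * B) ψ) ψ = inner ℂ (Q (B ψ)) (A ψ) := hA.isSymmetric _ _
      _ = inner ℂ (Q (B ψ)) (Q (A ψ)) := (hQ.inner_map_map _ _).symm
      _ = 0 := by rw [← inner_conj_symm, h, map_zero]
  exact ContinuousLinearMap.coe_injective <|
    (inner_map_self_eq_zero (A * Q * B : H →L[ℂ] H).toLinearMap).mp hdiag

end InnerProduct

theorem stmt_2_general {H : Type*} [NormedAddCommGroup H] [InnerProductSpace ℂ H] [CompleteSpace H]
    {m : ℕ} (P : Fin m → H →L[ℂ] H) (Q : H →L[ℂ] H)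
    (hPsa : ∀ j, IsSelfAdjoint (P j))
    (hPsum : ∑ j, P j = 1)
    (hQsa : IsSelfAdjoint Q)
    (hQidem : Q * Q = Q)
    (hyp : ∀ (ψ : H) (j ℓ : Fin m), j ≠ ℓ → (inner ℂ (Q (P j ψ)) (Q (P ℓ ψ)) : ℂ) = 0) :
    ∀ j, P j * Q - Q * P j = 0 := by
  have hQ : IsStarProjection Q := ⟨hQidem, hQsa⟩
  have hoff : ∀ j ℓ, j ≠ ℓ → P j * Q * P ℓ = 0 := fun j ℓ hjℓ =>
    mul_mul_eq_zero_of_inner_map_map_eq_zero (hPsa j) hQ fun ψ => hyp ψ j ℓ hjℓ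
  exact fun j => sub_eq_zero.mpr (commute_of_sum_eq_one_of_mul_mul_eq_zero hPsum hoff j).eq

/-- if `{P j}` is a finite complete family of orthogonal projections and `Q`
is an orthogonal projection on a complex Hilbert space such that the two-time decoherent
histories condition `⟨Q (P j ψ), Q (P ℓ ψ)⟩ = 0` holds for every vector `ψ` and all
`j ≠ ℓ`, then `Q` commutes with every `P j`. -/
theorem stmt_2 {H : Type*} [NormedAddCommGroup H] [InnerProductSpace ℂ H] [CompleteSpace H]
    {m : ℕ} (P : Fin m → H →L[ℂ] H) (Q : H →L[ℂ] H)
    (hPsa : ∀ j, IsSelfAdjoint (P j))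
    (hPorth : ∀ j ℓ, P j * P ℓ = if j = ℓ then P j else 0)
    (hPsum : ∑ j, P j = 1)
    (hQsa : IsSelfAdjoint Q)
    (hQidem : Q * Q = Q)
    (hyp : ∀ (ψ : H) (j ℓ : Fin m), j ≠ ℓ → (inner ℂ (Q (P j ψ)) (Q (P ℓ ψ)) : ℂ) = 0) :
    ∀ j, P j * Q - Q * P j = 0 :=
  stmt_2_general P Q hPsa hPsum hQsa hQidem hyp
end

section
/- Let H be a complex Hilbert space and let Φ, Ψ ∈ H be unit vectors whose inner product F = ⟨Φ, Ψ⟩ is real with 0 ≤ F ≤ 1. Then there exists a unitary operator V on H such that V Φ = Ψ, V x = x for every x orthogonal to the subspace K = span{Φ, Ψ}, and the operator norm of V − 1 (restricted to K, equivalently of V − 1 when Φ ≠ Ψ) satisfies ‖V − 1‖² = 2(1 − F) on K; in particular ‖(V − 1)x‖² ≤ 2(1−F)‖x‖² for all x ∈ H. -/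
/-!
Take `V = R_e ∘ R_Φ`, where `R_a` is the reflection in the hyperplane `aᗮ` and `e` is the unit
vector along the bisector `Φ + Ψ`: `R_Φ` sends `Φ` to `-Φ`, which `R_e` sends to `Ψ`, and both
reflections fix `Kᗮ`. As `R_e` is an isometric involution, `‖V x - x‖ = ‖R_Φ x - R_e x‖`, which is
twice the norm of the difference of the projections of `x` onto the lines `ℂ Φ` and `ℂ e`. Those
lines meet at an angle `θ` with `cos² θ = (1 + F) / 2`, so that difference is at most
`sin θ ‖x‖`, and `4 sin² θ = 2 (1 - F)`.
-/

open scoped InnerProductSpace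

section

variable {𝕜 E : Type*} [RCLike 𝕜] [NormedAddCommGroup E] [InnerProductSpace 𝕜 E]

/-- Cauchy–Schwarz applied to the components of `b` and `x` orthogonal to `a`. -/
theorem norm_inner_smul_sub_inner_smul_sq_le {a b : E} (ha : ‖a‖ = 1) (hb : ‖b‖ = 1) (x : E) :
    ‖⟪a, x⟫_𝕜 • a - ⟪b, x⟫_𝕜 • b‖ ^ 2 ≤ (1 - ‖⟪a, b⟫_𝕜‖ ^ 2) * ‖x‖ ^ 2 := by
  set z := b - ⟪a, b⟫_𝕜 • a
  set w := x - ⟪a, x⟫_𝕜 • a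
  have key : (1 - ‖⟪a, b⟫_𝕜‖ ^ 2) * ‖x‖ ^ 2 - ‖⟪a, x⟫_𝕜 • a - ⟪b, x⟫_𝕜 • b‖ ^ 2
      = ‖z‖ ^ 2 * ‖w‖ ^ 2 - ‖⟪z, w⟫_𝕜‖ ^ 2 := by
    apply RCLike.ofReal_injective (K := 𝕜)
    push_cast
    simp only [← RCLike.conj_mul, inner_conj_symm]
    simp only [← inner_self_eq_norm_sq_to_K, z, w, inner_sub_left, inner_sub_right,
      inner_smul_left, inner_smul_right, inner_conj_symm]
    rw [inner_self_eq_norm_sq_to_K a, inner_self_eq_norm_sq_to_K b, ha, hb, RCLike.ofReal_one]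
    ring
  have cauchy_schwarz : ‖⟪z, w⟫_𝕜‖ ^ 2 ≤ ‖z‖ ^ 2 * ‖w‖ ^ 2 := by
    rw [← mul_pow]
    gcongr
    exact norm_inner_le_norm z w
  linarith

namespace Submodule

theorem reflection_orthogonal_singleton_apply_of_norm_eq_one {e : E} (he : ‖e‖ = 1) (x : E) :
    reflection (𝕜 ∙ e)ᗮ x = x - (2 * ⟪e, x⟫_𝕜) • e := by
  rw [reflection_orthogonal_apply, reflection_apply, starProjection_unit_singleton 𝕜 he, mul_smul,
    two_smul 𝕜, two_smul ℕ]
  abel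

theorem norm_reflection_reflection_sub_sq_le {a b : E} (ha : ‖a‖ = 1) (hb : ‖b‖ = 1) (x : E) :
    ‖reflection (𝕜 ∙ b)ᗮ (reflection (𝕜 ∙ a)ᗮ x) - x‖ ^ 2
      ≤ 4 * (1 - ‖⟪a, b⟫_𝕜‖ ^ 2) * ‖x‖ ^ 2 := by
  have involution : reflection (𝕜 ∙ b)ᗮ (reflection (𝕜 ∙ a)ᗮ x) - x
      = reflection (𝕜 ∙ b)ᗮ (reflection (𝕜 ∙ a)ᗮ x - reflection (𝕜 ∙ b)ᗮ x) := by
    rw [map_sub, reflection_reflection]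
  have difference : reflection (𝕜 ∙ a)ᗮ x - reflection (𝕜 ∙ b)ᗮ x
      = -(2 : 𝕜) • (⟪a, x⟫_𝕜 • a - ⟪b, x⟫_𝕜 • b) := by
    rw [reflection_orthogonal_singleton_apply_of_norm_eq_one ha,
      reflection_orthogonal_singleton_apply_of_norm_eq_one hb]
    module
  rw [involution, LinearIsometryEquiv.norm_map, difference, norm_smul, norm_neg, mul_pow,
    RCLike.norm_two, mul_assoc]
  gcongr
  · norm_num
  · exact norm_inner_smul_sub_inner_smul_sq_le ha hb x

end Submodule

end

theorem stmt_6_general {H : Type*} [NormedAddCommGroup H] [InnerProductSpace ℂ H]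
    (Φ Ψ : H) (hΦ : ‖Φ‖ = 1) (hΨ : ‖Ψ‖ = 1) (F : ℝ)
    (hF : (inner ℂ Φ Ψ : ℂ) = (F : ℂ)) (hF0 : 0 ≤ F) :
    ∃ V : H ≃ₗᵢ[ℂ] H, V Φ = Ψ ∧
      (∀ x : H, (inner ℂ Φ x : ℂ) = 0 → (inner ℂ Ψ x : ℂ) = 0 → V x = x) ∧
      (∀ x : H, ‖V x - x‖ ^ 2 ≤ 2 * (1 - F) * ‖x‖ ^ 2) ∧
      (∃ x ∈ Submodule.span ℂ ({Φ, Ψ} : Set H), ‖x‖ = 1 ∧ ‖V x - x‖ ^ 2 = 2 * (1 - F)) := by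
  set u := Φ + Ψ
  have hu : ‖u‖ ^ 2 = 2 * (1 + F) := by
    rw [norm_add_sq (𝕜 := ℂ), hF, hΦ, hΨ, RCLike.re_to_complex, Complex.ofReal_re]
    ring
  have hu0 : ‖u‖ ≠ 0 := by
    intro h
    rw [h] at hu
    linarith
  set e : H := (‖u‖ : ℂ)⁻¹ • u
  have he : ‖e‖ = 1 := norm_smul_inv_norm (norm_ne_zero_iff.mp hu0)
  have hΦe : ⟪Φ, e⟫_ℂ = ((‖u‖⁻¹ * (1 + F) : ℝ) : ℂ) := by
    rw [inner_smul_right, inner_add_right, hF, inner_self_eq_norm_sq_to_K, hΦ]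
    push_cast
    ring
  set V := (Submodule.reflection (ℂ ∙ Φ)ᗮ).trans (Submodule.reflection (ℂ ∙ e)ᗮ)
  have hVΦ : V Φ = Ψ := by
    change Submodule.reflection (ℂ ∙ e)ᗮ (Submodule.reflection (ℂ ∙ Φ)ᗮ Φ) = Ψ
    rw [Submodule.reflection_orthogonalComplement_singleton_eq_neg,
      Submodule.reflection_orthogonal_singleton_apply_of_norm_eq_one he, inner_neg_right,
      ← inner_conj_symm, hΦe, Complex.conj_ofReal, smul_smul]
    have hscalar : (2 * -((‖u‖⁻¹ * (1 + F) : ℝ) : ℂ) * (‖u‖ : ℂ)⁻¹) = -1 := by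
      have hu' : (‖u‖ : ℂ) ^ 2 = 2 * (1 + F) := by exact_mod_cast hu
      have hu0' : (‖u‖ : ℂ) ≠ 0 := by exact_mod_cast hu0
      push_cast
      field_simp
      linear_combination hu'
    rw [hscalar, neg_one_smul, sub_neg_eq_add, neg_add_cancel_left]
  refine ⟨V, hVΦ, fun x hΦx hΨx => ?_, fun x => ?_, Φ, Submodule.subset_span (by simp), hΦ, ?_⟩
  · have hex : ⟪e, x⟫_ℂ = 0 := by
      rw [inner_smul_left, inner_add_left, hΦx, hΨx, add_zero, mul_zero]
    change Submodule.reflection (ℂ ∙ e)ᗮ (Submodule.reflection (ℂ ∙ Φ)ᗮ x) = x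
    rw [Submodule.reflection_mem_subspace_eq_self
        (Submodule.mem_orthogonal_singleton_iff_inner_right.2 hΦx),
      Submodule.reflection_mem_subspace_eq_self
        (Submodule.mem_orthogonal_singleton_iff_inner_right.2 hex)]
  · calc ‖V x - x‖ ^ 2 ≤ 4 * (1 - ‖⟪Φ, e⟫_ℂ‖ ^ 2) * ‖x‖ ^ 2 :=
          Submodule.norm_reflection_reflection_sub_sq_le hΦ he x
      _ = 2 * (1 - F) * ‖x‖ ^ 2 := by
        rw [hΦe, Complex.norm_real, Real.norm_eq_abs, sq_abs, mul_pow, inv_pow, hu]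
        field_simp
        ring
  · rw [hVΦ, norm_sub_sq (𝕜 := ℂ), hΦ, hΨ, ← inner_conj_symm, hF, Complex.conj_ofReal,
      RCLike.re_to_complex, Complex.ofReal_re]
    ring

/-- given unit vectors `Φ, Ψ` in a complex Hilbert space with real inner
product `F ∈ [0,1]`, there is a unitary `V` with `V Φ = Ψ`, fixing every vector
orthogonal to `K = span{Φ, Ψ}`, such that `‖V x - x‖² ≤ 2(1-F)‖x‖²` for all `x`, and the
bound `2(1-F)` is attained on a unit vector of `K` (i.e. `‖(V-1)|_K‖² = 2(1-F)`). -/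
theorem stmt_6 {H : Type*} [NormedAddCommGroup H] [InnerProductSpace ℂ H]
    (Φ Ψ : H) (hΦ : ‖Φ‖ = 1) (hΨ : ‖Ψ‖ = 1) (F : ℝ)
    (hF : (inner ℂ Φ Ψ : ℂ) = (F : ℂ)) (hF0 : 0 ≤ F) (hF1 : F ≤ 1) :
    ∃ V : H ≃ₗᵢ[ℂ] H, V Φ = Ψ ∧
      (∀ x : H, (inner ℂ Φ x : ℂ) = 0 → (inner ℂ Ψ x : ℂ) = 0 → V x = x) ∧
      (∀ x : H, ‖V x - x‖ ^ 2 ≤ 2 * (1 - F) * ‖x‖ ^ 2) ∧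
      (∃ x ∈ Submodule.span ℂ ({Φ, Ψ} : Set H), ‖x‖ = 1 ∧ ‖V x - x‖ ^ 2 = 2 * (1 - F)) :=
  stmt_6_general Φ Ψ hΦ hΨ F hF hF0
end

section
/- Let ψ_1, …, ψ_N be unit vectors in ℂ^d and let G be their N×N Gram matrix, G_{ij} = ⟨ψ_i, ψ_j⟩ (a positive semidefinite Hermitian matrix with nonnegative real determinant). Then there exists a POVM (M_x)_{x=1}^{N} on ℂ^d — i.e. positive semidefinite d×d complex matrices with ∑_{x=1}^{N} M_x = I — whose average success probability for the uniform ensemble satisfies (1/N) ∑_{x=1}^{N} ⟨ψ_x, M_x ψ_x⟩ ≥ (det G)^{1/N}. In particular the optimal average success probability P̄_S^opt of discriminating the uniformly weighted states ψ_1,…,ψ_N satisfies (det G)^{1/N} ≤ P̄_S^opt. -/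
/-!
Gram–Schmidt orthogonalisation of the states gives pairwise orthogonal vectors `u x` with
`⟪u x, ψ x⟫ = ‖u x‖²`, and `ψ = u T` with `T` unitriangular, so `G = Tᴴ diag(‖u x‖²) T` and
`det G = ∏ ‖u x‖²`. By Bessel's inequality the rank-one projections onto the normalised `u x`
sum to at most the identity; putting the remainder on one outcome yields a POVM that identifies
`ψ x` with probability at least `|⟪u x / ‖u x‖, ψ x⟫|² = ‖u x‖²`. AM–GM then gives
`(1/N) ∑ ‖u x‖² ≥ (det G)^{1/N}`. Every success probability of state `x` is at most `‖ψ x‖²`,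
so the supremum is over a bounded set.
-/

open Matrix
open scoped ComplexOrder

open InnerProductSpace Finset WithLp
open scoped InnerProductSpace

section GramSchmidt

variable {𝕜 E ι : Type*} [RCLike 𝕜] [NormedAddCommGroup E] [InnerProductSpace 𝕜 E]

theorem gram_sum_smul {κ : Type*} [Fintype ι] (u : ι → E) (T : Matrix ι κ 𝕜) :
    gram 𝕜 (fun j => ∑ i, T i j • u i) = Tᴴ * gram 𝕜 u * T := by
  ext j k
  simp only [gram_apply, sum_inner, inner_sum, inner_smul_left, inner_smul_right, mul_apply,
    conjTranspose_apply, RCLike.star_def, Finset.sum_mul, Finset.mul_sum]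
  exact Finset.sum_congr rfl fun _ _ => Finset.sum_congr rfl fun _ _ => by ring

variable [LinearOrder ι] [LocallyFiniteOrderBot ι] [WellFoundedLT ι]

theorem inner_gramSchmidt_self (f : ι → E) (n : ι) :
    ⟪gramSchmidt 𝕜 f n, f n⟫_𝕜 = (‖gramSchmidt 𝕜 f n‖ : 𝕜) ^ 2 := by
  conv_lhs => rw [gramSchmidt_def'' 𝕜 f n]
  rw [inner_add_right, inner_self_eq_norm_sq_to_K, inner_sum, add_eq_left]
  refine Finset.sum_eq_zero fun i hi => ?_
  rw [inner_smul_right, gramSchmidt_orthogonal 𝕜 f (Finset.mem_Iio.mp hi).ne', mul_zero]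

theorem norm_inner_gramSchmidtNormed_self (f : ι → E) (n : ι) :
    ‖⟪gramSchmidtNormed 𝕜 f n, f n⟫_𝕜‖ = ‖gramSchmidt 𝕜 f n‖ := by
  rw [gramSchmidtNormed, inner_smul_left, inner_gramSchmidt_self, norm_mul, norm_pow,
    RCLike.norm_conj, norm_inv, RCLike.norm_ofReal, abs_norm]
  rcases eq_or_ne ‖gramSchmidt 𝕜 f n‖ 0 with h | h
  · simp [h]
  · field_simp

theorem sum_norm_inner_gramSchmidtNormed_sq_le [Fintype ι] (f : ι → E) (x : E) :
    ∑ i, ‖⟪gramSchmidtNormed 𝕜 f i, x⟫_𝕜‖ ^ 2 ≤ ‖x‖ ^ 2 := by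
  classical
  have hbessel := (gramSchmidtNormed_orthonormal' (𝕜 := 𝕜) f).sum_inner_products_le x
    (s := Finset.univ)
  rw [← Finset.sum_filter_of_ne (p := fun i => gramSchmidtNormed 𝕜 f i ≠ 0)]
  · rwa [Finset.sum_subtype _ (p := (· ∈ {i | gramSchmidtNormed 𝕜 f i ≠ 0})) fun i => by simp]
  · intro i _ hi h
    simp [h] at hi

variable (𝕜) in
noncomputable def gramSchmidtCoeff (f : ι → E) : Matrix ι ι 𝕜 :=
  1 + of fun i j =>
    if i < j then ⟪gramSchmidt 𝕜 f i, f j⟫_𝕜 / (‖gramSchmidt 𝕜 f i‖ : 𝕜) ^ 2 else 0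

theorem sum_gramSchmidtCoeff_smul [Fintype ι] [DecidableEq ι] (f : ι → E) (j : ι) :
    ∑ i, gramSchmidtCoeff 𝕜 f i j • gramSchmidt 𝕜 f i = f j := by
  rw [gramSchmidt_def'' 𝕜 f j]
  simp [gramSchmidtCoeff, one_apply, add_smul, Finset.sum_add_distrib, ite_smul, Finset.sum_ite,
    Finset.filter_gt_eq_Iio]

theorem det_gramSchmidtCoeff [Fintype ι] [DecidableEq ι] (f : ι → E) :
    (gramSchmidtCoeff 𝕜 f).det = 1 := by
  rw [det_of_isUpperTriangular]
  · simp [gramSchmidtCoeff]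
  · intro i j (hij : j < i)
    simp [gramSchmidtCoeff, one_apply, hij.ne', hij.not_gt]

theorem gram_gramSchmidt [DecidableEq ι] (f : ι → E) :
    gram 𝕜 (gramSchmidt 𝕜 f) = diagonal fun i => (‖gramSchmidt 𝕜 f i‖ : 𝕜) ^ 2 := by
  ext i j
  rcases eq_or_ne i j with rfl | hij
  · simp [gram_apply, inner_self_eq_norm_sq_to_K]
  · simp [gram_apply, gramSchmidt_orthogonal 𝕜 f hij, hij]

theorem det_gram_eq_prod_norm_gramSchmidt_sq [Fintype ι] [DecidableEq ι] (f : ι → E) :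
    (gram 𝕜 f).det = ∏ i, (‖gramSchmidt 𝕜 f i‖ : 𝕜) ^ 2 := by
  conv_lhs => rw [← funext (sum_gramSchmidtCoeff_smul (𝕜 := 𝕜) f)]
  rw [gram_sum_smul, det_mul, det_mul, det_conjTranspose, det_gramSchmidtCoeff, gram_gramSchmidt,
    det_diagonal]
  simp

end GramSchmidt

section Povm

variable {𝕜 n ι : Type*} [RCLike 𝕜]

theorem star_dotProduct_vecMulVec_mulVec [Fintype n] (x y : EuclideanSpace 𝕜 n) :
    star (ofLp y) ⬝ᵥ (vecMulVec (ofLp x) (star (ofLp x)) *ᵥ ofLp y) = (‖⟪x, y⟫_𝕜‖ ^ 2 : 𝕜) := by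
  have hinner : star (ofLp x) ⬝ᵥ ofLp y = ⟪x, y⟫_𝕜 := by
    rw [EuclideanSpace.inner_eq_star_dotProduct, dotProduct_comm]
  have hconj : star (ofLp y) ⬝ᵥ ofLp x = star ⟪x, y⟫_𝕜 := by
    rw [← hinner, star_dotProduct]
  rw [vecMulVec_mulVec, dotProduct_smul, op_smul_eq_smul, smul_eq_mul, hconj, hinner,
    RCLike.star_def, RCLike.mul_conj]

theorem posSemidef_one_sub_sum_vecMulVec [Fintype n] [DecidableEq n] [Fintype ι]
    (e : ι → EuclideanSpace 𝕜 n) (he : ∀ y, ∑ i, ‖⟪e i, y⟫_𝕜‖ ^ 2 ≤ ‖y‖ ^ 2) :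
    (1 - ∑ i, vecMulVec (ofLp (e i)) (star (ofLp (e i)))).PosSemidef := by
  refine .of_dotProduct_mulVec_nonneg ?_ fun w => ?_
  · simp [IsHermitian, conjTranspose_sum, conjTranspose_vecMulVec]
  · have hw : star w ⬝ᵥ w = (‖toLp 2 w‖ ^ 2 : 𝕜) := by
      rw [← inner_self_eq_norm_sq_to_K, EuclideanSpace.inner_toLp_toLp, dotProduct_comm]
    have hq : ∀ i, star w ⬝ᵥ (vecMulVec (ofLp (e i)) (star (ofLp (e i))) *ᵥ w) =
        (‖⟪e i, toLp 2 w⟫_𝕜‖ ^ 2 : 𝕜) := fun i => star_dotProduct_vecMulVec_mulVec (e i) (toLp 2 w)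
    rw [sub_mulVec, one_mulVec, sum_mulVec, dotProduct_sub, dotProduct_sum, hw]
    simp only [hq]
    exact_mod_cast sub_nonneg.mpr (he _)

theorem exists_povm_sub_posSemidef [DecidableEq n] [Fintype ι] [Nonempty ι]
    {P : ι → Matrix n n 𝕜} (hP : ∀ i, (P i).PosSemidef) (hsum : (1 - ∑ i, P i).PosSemidef) :
    ∃ M : ι → Matrix n n 𝕜, (∀ i, (M i).PosSemidef) ∧ ∑ i, M i = 1 ∧
      ∀ i, (M i - P i).PosSemidef := by
  classical
  let i₀ : ι := Classical.arbitrary ι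
  let rest : ι → Matrix n n 𝕜 := Pi.single i₀ (1 - ∑ i, P i)
  have hrest : ∀ i, (rest i).PosSemidef := fun i => by
    rcases eq_or_ne i i₀ with rfl | h
    · simpa [rest] using hsum
    · simpa [rest, h] using PosSemidef.zero
  refine ⟨P + rest, fun i => (hP i).add (hrest i), ?_, fun i => ?_⟩
  · simp [rest, Finset.sum_add_distrib, Finset.sum_pi_single']
  · simpa using hrest i

theorem dotProduct_mulVec_le_of_sum_eq_one [Fintype n] [DecidableEq n] [Fintype ι]
    {M : ι → Matrix n n 𝕜} (hM : ∀ i, (M i).PosSemidef) (hsum : ∑ i, M i = 1) (v : n → 𝕜)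
    (i : ι) : star v ⬝ᵥ (M i *ᵥ v) ≤ star v ⬝ᵥ v := by
  calc star v ⬝ᵥ (M i *ᵥ v) ≤ ∑ j, star v ⬝ᵥ (M j *ᵥ v) :=
        Finset.single_le_sum (fun j _ => (hM j).dotProduct_mulVec_nonneg v) (Finset.mem_univ i)
    _ = star v ⬝ᵥ v := by rw [← dotProduct_sum, ← sum_mulVec, hsum, one_mulVec]

theorem exists_povm_norm_gramSchmidt_sq_le [Fintype n] [DecidableEq n] [Fintype ι]
    [LinearOrder ι] [LocallyFiniteOrderBot ι] [Nonempty ι] (v : ι → EuclideanSpace 𝕜 n) :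
    ∃ M : ι → Matrix n n 𝕜, (∀ i, (M i).PosSemidef) ∧ ∑ i, M i = 1 ∧
      ∀ i, ‖gramSchmidt 𝕜 v i‖ ^ 2 ≤ RCLike.re (star (ofLp (v i)) ⬝ᵥ (M i *ᵥ ofLp (v i))) := by
  set e := gramSchmidtNormed 𝕜 v
  obtain ⟨M, hM, hsum, hge⟩ := exists_povm_sub_posSemidef
    (fun i => posSemidef_vecMulVec_self_star (ofLp (e i)))
    (posSemidef_one_sub_sum_vecMulVec e (sum_norm_inner_gramSchmidtNormed_sq_le v))
  refine ⟨M, hM, hsum, fun i => ?_⟩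
  have h := (hge i).dotProduct_mulVec_nonneg (ofLp (v i))
  rw [sub_mulVec, dotProduct_sub, sub_nonneg, star_dotProduct_vecMulVec_mulVec,
    norm_inner_gramSchmidtNormed_self] at h
  exact_mod_cast (RCLike.le_iff_re_im.mp h).1

end Povm

theorem Real.geom_mean_le_arith_mean_uniform {ι : Type*} [Fintype ι] [Nonempty ι] (z : ι → ℝ)
    (hz : ∀ i, 0 ≤ z i) :
    (∏ i, z i) ^ ((1 : ℝ) / Fintype.card ι) ≤ 1 / Fintype.card ι * ∑ i, z i := by
  have hw : ∑ _i : ι, (1 : ℝ) / Fintype.card ι = 1 := by simp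
  rw [← Real.finsetProd_rpow _ _ fun i _ => hz i, Finset.mul_sum]
  exact Real.geom_mean_le_arith_mean_weighted _ _ _ (fun _ _ => by positivity) hw fun i _ => hz i

theorem stmt_9_general (d N : ℕ) (hN : 1 ≤ N)
    (ψ : Fin N → Fin d → ℂ)
    (G : Matrix (Fin N) (Fin N) ℂ)
    (hG : ∀ i j, G i j = dotProduct (star (ψ i)) (ψ j)) :
    (∃ M : Fin N → Matrix (Fin d) (Fin d) ℂ,
      (∀ x, (M x).PosSemidef) ∧ (∑ x, M x = 1) ∧
      G.det.re ^ ((1 : ℝ) / N) ≤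
        (1 / (N : ℝ)) * ∑ x, (dotProduct (star (ψ x)) (M x *ᵥ ψ x)).re) ∧
    G.det.re ^ ((1 : ℝ) / N) ≤
      sSup {p : ℝ | ∃ M : Fin N → Matrix (Fin d) (Fin d) ℂ,
        (∀ x, (M x).PosSemidef) ∧ (∑ x, M x = 1) ∧
        p = (1 / (N : ℝ)) * ∑ x, (dotProduct (star (ψ x)) (M x *ᵥ ψ x)).re} := by
  have : Nonempty (Fin N) := ⟨⟨0, hN⟩⟩
  let v : Fin N → EuclideanSpace ℂ (Fin d) := fun x => toLp 2 (ψ x)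
  have hdet : G.det.re = ∏ x, ‖gramSchmidt ℂ v x‖ ^ 2 := by
    have hGv : G = gram ℂ v := by
      ext i j
      rw [hG, gram_apply, EuclideanSpace.inner_toLp_toLp, dotProduct_comm]
    rw [hGv, det_gram_eq_prod_norm_gramSchmidt_sq]
    norm_cast
  obtain ⟨M, hM, hsum, hsucc⟩ := exists_povm_norm_gramSchmidt_sq_le v
  have hle : G.det.re ^ ((1 : ℝ) / N) ≤
      (1 / (N : ℝ)) * ∑ x, (dotProduct (star (ψ x)) (M x *ᵥ ψ x)).re :=
    calc G.det.re ^ ((1 : ℝ) / N) ≤ 1 / (N : ℝ) * ∑ x, ‖gramSchmidt ℂ v x‖ ^ 2 := by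
          simpa [hdet] using Real.geom_mean_le_arith_mean_uniform
            (fun x => ‖gramSchmidt ℂ v x‖ ^ 2) fun x => by positivity
      _ ≤ _ := by gcongr with x; exact hsucc x
  have hbdd : BddAbove {p : ℝ | ∃ M : Fin N → Matrix (Fin d) (Fin d) ℂ,
      (∀ x, (M x).PosSemidef) ∧ (∑ x, M x = 1) ∧
      p = (1 / (N : ℝ)) * ∑ x, (dotProduct (star (ψ x)) (M x *ᵥ ψ x)).re} := by
    refine ⟨(1 / (N : ℝ)) * ∑ x, (star (ψ x) ⬝ᵥ ψ x).re, ?_⟩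
    rintro _ ⟨M', hM', hsum', rfl⟩
    gcongr with x
    exact dotProduct_mulVec_le_of_sum_eq_one hM' hsum' (ψ x) x
  exact ⟨⟨M, hM, hsum, hle⟩, hle.trans (le_csSup hbdd ⟨M, hM, hsum, rfl⟩)⟩

/-- for unit vectors `ψ x` in `ℂ^d` with Gram matrix `G`, there exists a POVM
`(M x)` on `ℂ^d` whose average success probability on the uniform ensemble is at least
`(det G)^{1/N}`; in particular the optimal average success probability of discrimination
is at least `(det G)^{1/N}`. -/
theorem stmt_9 (d N : ℕ) (hN : 1 ≤ N)
    (ψ : Fin N → Fin d → ℂ)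
    (hunit : ∀ x, dotProduct (star (ψ x)) (ψ x) = 1)
    (G : Matrix (Fin N) (Fin N) ℂ)
    (hG : ∀ i j, G i j = dotProduct (star (ψ i)) (ψ j)) :
    (∃ M : Fin N → Matrix (Fin d) (Fin d) ℂ,
      (∀ x, (M x).PosSemidef) ∧ (∑ x, M x = 1) ∧
      G.det.re ^ ((1 : ℝ) / N) ≤
        (1 / (N : ℝ)) * ∑ x, (dotProduct (star (ψ x)) (M x *ᵥ ψ x)).re) ∧
    G.det.re ^ ((1 : ℝ) / N) ≤
      sSup {p : ℝ | ∃ M : Fin N → Matrix (Fin d) (Fin d) ℂ,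
        (∀ x, (M x).PosSemidef) ∧ (∑ x, M x = 1) ∧
        p = (1 / (N : ℝ)) * ∑ x, (dotProduct (star (ψ x)) (M x *ᵥ ψ x)).re} :=
  stmt_9_general d N hN ψ G hG
end

section
/- Let ψ_1, …, ψ_N be unit vectors in ℂ^d with Gram matrix G_{ij} = ⟨ψ_i, ψ_j⟩. Let (M_x)_{x=0}^{N} be any POVM on ℂ^d (positive semidefinite matrices with ∑_{x=0}^{N} M_x = I) that performs unambiguous discrimination, i.e. ⟨ψ_y, M_x ψ_y⟩ = 0 for all x ≠ y with 1 ≤ x, y ≤ N. Then the worst-case success probability satisfies min_{1 ≤ x ≤ N} ⟨ψ_x, M_x ψ_x⟩ ≤ λ_min(G) ≤ (det G)^{1/N}, where λ_min(G) is the smallest eigenvalue of G. In particular the optimal worst-case success probability of unambiguous discrimination obeys P_UN^opt ≤ (det G)^{1/N}. -/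
/-!
Unambiguity forces `M x ψ y = 0` for `x ≠ y`, so `ψ y = M₀ ψ y + M y ψ y`, and the Gram matrix
splits as `G = Γ + diagonal p`, where `Γ i j = ⟪ψ i, M₀ ψ j⟫` is positive semidefinite and `p x` is
the success probability of outcome `x`. Hence `G ≥ (min p) • 1` in the Loewner order, which gives
`min p ≤ λ_min(G)`; and `λ_min(G) ^ N ≤ ∏ λᵢ = det G`.
-/

open Matrix
open scoped ComplexOrder

lemma Real.iInf_le_prod_rpow_one_div_card {ι : Type*} [Fintype ι] [Nonempty ι] {f : ι → ℝ}
    (hf : ∀ i, 0 ≤ f i) : ⨅ i, f i ≤ (∏ i, f i) ^ ((1 : ℝ) / Fintype.card ι) := by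
  have hinf : 0 ≤ ⨅ i, f i := le_ciInf hf
  rw [one_div, Real.le_rpow_inv_iff_of_pos hinf (Finset.prod_nonneg fun i _ => hf i)
    (by exact_mod_cast Fintype.card_pos), Real.rpow_natCast]
  calc (⨅ i, f i) ^ Fintype.card ι = ∏ _i : ι, ⨅ i, f i := by simp
    _ ≤ ∏ i, f i := Finset.prod_le_prod (fun _ _ => hinf)
        fun i _ => ciInf_le (Set.finite_range f).bddBelow i

namespace Matrix

variable {𝕜 n ι : Type*} [RCLike 𝕜] [Fintype n] [Fintype ι]

lemma IsHermitian.star_dotProduct_mulVec_eq_zero {M : Matrix n n 𝕜} (hM : M.IsHermitian)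
    {v : n → 𝕜} (hv : M *ᵥ v = 0) (w : n → 𝕜) : star v ⬝ᵥ (M *ᵥ w) = 0 := by
  rw [dotProduct_mulVec, ← hM.eq, ← star_mulVec, hv, star_zero, zero_dotProduct]

lemma PosSemidef.ofReal_re_star_dotProduct_mulVec {M : Matrix n n 𝕜} (hM : M.PosSemidef)
    (v : n → 𝕜) : (RCLike.re (star v ⬝ᵥ (M *ᵥ v)) : 𝕜) = star v ⬝ᵥ (M *ᵥ v) := by
  obtain ⟨-, him⟩ := RCLike.nonneg_iff.mp (hM.dotProduct_mulVec_nonneg v)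
  rw [← RCLike.re_add_im (star v ⬝ᵥ (M *ᵥ v)), him]
  simp

lemma PosSemidef.posSemidef_gram_mulVec {M : Matrix n n 𝕜} (hM : M.PosSemidef) (ψ : ι → n → 𝕜) :
    (of fun i j => star (ψ i) ⬝ᵥ (M *ᵥ ψ j)).PosSemidef := by
  convert hM.conjTranspose_mul_mul_same (of fun k i => ψ i k) using 1
  ext i j
  simp only [of_apply, mul_apply, conjTranspose_apply, mulVec, dotProduct, Pi.star_apply,
    Finset.sum_mul, Finset.mul_sum]
  rw [Finset.sum_comm]
  exact Finset.sum_congr rfl fun _ _ => Finset.sum_congr rfl fun _ _ => by ring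

lemma IsHermitian.iInf_le_eigenvalues_of_posSemidef_sub_diagonal [DecidableEq n]
    {A : Matrix n n 𝕜} (hA : A.IsHermitian) {c : n → ℝ}
    (hc : (A - diagonal fun i => (c i : 𝕜)).PosSemidef) (j : n) :
    ⨅ i, c i ≤ hA.eigenvalues j := by
  set v : n → 𝕜 := ⇑(hA.eigenvectorBasis j)
  have hv : ∑ i, ‖v i‖ ^ 2 = 1 := by
    rw [← EuclideanSpace.norm_sq_eq, hA.eigenvectorBasis.norm_eq_one, one_pow]
  have hdiag :
      RCLike.re (star v ⬝ᵥ (diagonal (fun i => (c i : 𝕜)) *ᵥ v)) = ∑ i, c i * ‖v i‖ ^ 2 := by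
    simp only [dotProduct, mulVec_diagonal, Pi.star_apply, map_sum]
    refine Finset.sum_congr rfl fun i _ => ?_
    rw [mul_left_comm, RCLike.star_def, RCLike.conj_mul, ← RCLike.ofReal_pow, ← RCLike.ofReal_mul,
      RCLike.ofReal_re]
  have hsplit : A = (A - diagonal fun i => (c i : 𝕜)) + diagonal fun i => (c i : 𝕜) := by
    rw [sub_add_cancel]
  calc ⨅ i, c i = ∑ i, (⨅ i, c i) * ‖v i‖ ^ 2 := by rw [← Finset.mul_sum, hv, mul_one]
    _ ≤ ∑ i, c i * ‖v i‖ ^ 2 := by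
      gcongr with i
      exact ciInf_le (Set.finite_range c).bddBelow i
    _ ≤ RCLike.re (star v ⬝ᵥ ((A - diagonal fun i => (c i : 𝕜)) *ᵥ v)) + ∑ i, c i * ‖v i‖ ^ 2 :=
      le_add_of_nonneg_left (hc.re_dotProduct_nonneg v)
    _ = hA.eigenvalues j := by
      rw [hA.eigenvalues_eq, ← hdiag, ← map_add, ← dotProduct_add, ← add_mulVec, ← hsplit]

lemma PosSemidef.iInf_eigenvalues_le_re_det_rpow [DecidableEq n] [Nonempty n]
    {A : Matrix n n 𝕜} (hA : A.PosSemidef) :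
    ⨅ i, hA.1.eigenvalues i ≤ RCLike.re A.det ^ ((1 : ℝ) / Fintype.card n) := by
  rw [hA.1.det_eq_prod_eigenvalues, ← RCLike.ofReal_prod, RCLike.ofReal_re]
  exact Real.iInf_le_prod_rpow_one_div_card hA.eigenvalues_nonneg

section Unambiguous

variable [DecidableEq n] [DecidableEq ι] {M₀ : Matrix n n 𝕜} {M : ι → Matrix n n 𝕜} {ψ : ι → n → 𝕜}

lemma gram_eq_add_diagonal_of_unambiguous (hM : ∀ x, (M x).PosSemidef)
    (hsum : M₀ + ∑ x, M x = 1) (hun : ∀ x y, x ≠ y → star (ψ y) ⬝ᵥ (M x *ᵥ ψ y) = 0) :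
    (of fun i j => star (ψ i) ⬝ᵥ ψ j) =
      (of fun i j => star (ψ i) ⬝ᵥ (M₀ *ᵥ ψ j)) +
        diagonal fun x => star (ψ x) ⬝ᵥ (M x *ᵥ ψ x) := by
  have hkill : ∀ x y, x ≠ y → M x *ᵥ ψ y = 0 := fun x y hxy =>
    ((hM x).dotProduct_mulVec_zero_iff _).mp (hun x y hxy)
  have hsplit : ∀ y, ψ y = M₀ *ᵥ ψ y + M y *ᵥ ψ y := fun y => by
    have := congrArg (· *ᵥ ψ y) hsum
    simp only [add_mulVec, sum_mulVec, one_mulVec] at this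
    rwa [Finset.sum_eq_single y (fun x _ hxy => hkill x y hxy) (by simp), eq_comm] at this
  ext i j
  calc star (ψ i) ⬝ᵥ ψ j = star (ψ i) ⬝ᵥ (M₀ *ᵥ ψ j) + star (ψ i) ⬝ᵥ (M j *ᵥ ψ j) := by
        rw [← dotProduct_add, ← hsplit]
    _ = _ := by
      obtain rfl | hij := eq_or_ne i j
      · simp
      · rw [(hM j).1.star_dotProduct_mulVec_eq_zero (hkill j i (Ne.symm hij))]
        simp [hij]

theorem iInf_re_le_eigenvalues_of_unambiguous {G : Matrix ι ι 𝕜} (hGH : G.IsHermitian)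
    (hG : ∀ i j, G i j = star (ψ i) ⬝ᵥ ψ j) (hM₀ : M₀.PosSemidef) (hM : ∀ x, (M x).PosSemidef)
    (hsum : M₀ + ∑ x, M x = 1) (hun : ∀ x y, x ≠ y → star (ψ y) ⬝ᵥ (M x *ᵥ ψ y) = 0) (j : ι) :
    ⨅ x, RCLike.re (star (ψ x) ⬝ᵥ (M x *ᵥ ψ x)) ≤ hGH.eigenvalues j := by
  refine hGH.iInf_le_eigenvalues_of_posSemidef_sub_diagonal ?_ j
  have hGeq : G = of fun i j => star (ψ i) ⬝ᵥ ψ j := by ext i j; exact hG i j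
  simp only [(hM _).ofReal_re_star_dotProduct_mulVec, hGeq,
    gram_eq_add_diagonal_of_unambiguous hM hsum hun, add_sub_cancel_right]
  exact hM₀.posSemidef_gram_mulVec ψ

end Unambiguous

end Matrix

theorem stmt_10_general (d N : ℕ) (hN : 1 ≤ N)
    (ψ : Fin N → Fin d → ℂ)
    (G : Matrix (Fin N) (Fin N) ℂ)
    (hG : ∀ i j, G i j = dotProduct (star (ψ i)) (ψ j))
    (hGH : G.IsHermitian) :
    (∀ M : Fin (N + 1) → Matrix (Fin d) (Fin d) ℂ,
      (∀ x, (M x).PosSemidef) → (∑ x, M x = 1) →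
      (∀ x y : Fin N, x ≠ y →
        dotProduct (star (ψ y)) (M x.succ *ᵥ ψ y) = 0) →
      (⨅ x : Fin N, (dotProduct (star (ψ x)) (M x.succ *ᵥ ψ x)).re) ≤
        ⨅ i, hGH.eigenvalues i) ∧
    (⨅ i, hGH.eigenvalues i) ≤ G.det.re ^ ((1 : ℝ) / N) ∧
    sSup {p : ℝ | ∃ M : Fin (N + 1) → Matrix (Fin d) (Fin d) ℂ,
        (∀ x, (M x).PosSemidef) ∧ (∑ x, M x = 1) ∧
        (∀ x y : Fin N, x ≠ y →
          dotProduct (star (ψ y)) (M x.succ *ᵥ ψ y) = 0) ∧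
        p = ⨅ x : Fin N, (dotProduct (star (ψ x)) (M x.succ *ᵥ ψ x)).re} ≤
      G.det.re ^ ((1 : ℝ) / N) := by
  have : Nonempty (Fin N) := ⟨⟨0, hN⟩⟩
  have hGpsd : G.PosSemidef := by
    have hGeq : G = of fun i j => star (ψ i) ⬝ᵥ (1 *ᵥ ψ j) := by ext i j; simp [hG]
    exact hGeq ▸ PosSemidef.one.posSemidef_gram_mulVec ψ
  have success_le : ∀ M : Fin (N + 1) → Matrix (Fin d) (Fin d) ℂ, (∀ x, (M x).PosSemidef) →
      ∑ x, M x = 1 → (∀ x y : Fin N, x ≠ y → star (ψ y) ⬝ᵥ (M x.succ *ᵥ ψ y) = 0) →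
      ⨅ x : Fin N, (star (ψ x) ⬝ᵥ (M x.succ *ᵥ ψ x)).re ≤ ⨅ i, hGH.eigenvalues i :=
    fun M hM hsum hun => le_ciInf fun j =>
      iInf_re_le_eigenvalues_of_unambiguous hGH hG (hM 0) (fun x => hM x.succ)
        (by rwa [← Fin.sum_univ_succ]) hun j
  have eigen_le : ⨅ i, hGH.eigenvalues i ≤ G.det.re ^ ((1 : ℝ) / N) := by
    simpa using hGpsd.iInf_eigenvalues_le_re_det_rpow
  refine ⟨success_le, eigen_le, Real.sSup_le ?_ (eigen_le.trans' ?_)⟩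
  · rintro p ⟨M, hM, hsum, hun, rfl⟩
    exact (success_le M hM hsum hun).trans eigen_le
  · exact le_ciInf hGpsd.eigenvalues_nonneg

/-- for unit vectors `ψ x` in `ℂ^d` with Hermitian Gram matrix `G`, any POVM
`(M x)_{x=0}^{N}` performing unambiguous discrimination (outcome `x ∈ {1,…,N}` never occurs
on `ψ y` for `y ≠ x`, index `0` being inconclusive) has worst-case success probability at
most `λ_min(G)`, which in turn is at most `(det G)^{1/N}`; in particular the optimal
worst-case success probability of unambiguous discrimination is at most `(det G)^{1/N}`. -/
theorem stmt_10 (d N : ℕ) (hN : 1 ≤ N)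
    (ψ : Fin N → Fin d → ℂ)
    (hunit : ∀ x, dotProduct (star (ψ x)) (ψ x) = 1)
    (G : Matrix (Fin N) (Fin N) ℂ)
    (hG : ∀ i j, G i j = dotProduct (star (ψ i)) (ψ j))
    (hGH : G.IsHermitian) :
    (∀ M : Fin (N + 1) → Matrix (Fin d) (Fin d) ℂ,
      (∀ x, (M x).PosSemidef) → (∑ x, M x = 1) →
      (∀ x y : Fin N, x ≠ y →
        dotProduct (star (ψ y)) (M x.succ *ᵥ ψ y) = 0) →
      (⨅ x : Fin N, (dotProduct (star (ψ x)) (M x.succ *ᵥ ψ x)).re) ≤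
        ⨅ i, hGH.eigenvalues i) ∧
    (⨅ i, hGH.eigenvalues i) ≤ G.det.re ^ ((1 : ℝ) / N) ∧
    sSup {p : ℝ | ∃ M : Fin (N + 1) → Matrix (Fin d) (Fin d) ℂ,
        (∀ x, (M x).PosSemidef) ∧ (∑ x, M x = 1) ∧
        (∀ x y : Fin N, x ≠ y →
          dotProduct (star (ψ y)) (M x.succ *ᵥ ψ y) = 0) ∧
        p = ⨅ x : Fin N, (dotProduct (star (ψ x)) (M x.succ *ᵥ ψ x)).re} ≤
      G.det.re ^ ((1 : ℝ) / N) :=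
  stmt_10_general d N hN ψ G hG hGH
end

section
/- Let (Ω, μ) be a probability space, let f, g : Ω → ℝ be measurable, let μ_f, μ_g be nonzero real numbers, and let ε_f, ε_g : (0,∞) → [0,∞) be functions such that for every δ > 0, μ{ω : |f(ω)/μ_f − 1| > δ} ≤ ε_f(δ) and μ{ω : |g(ω)/μ_g − 1| > δ} ≤ ε_g(δ). Then for every δ > 0, μ{ω : |f(ω)g(ω)/(μ_f μ_g) − 1| > δ} ≤ ε_f(√(δ/3)) + ε_g(√(δ/3)) + ε_f(δ/3) + ε_g(δ/3). -/
open MeasureTheory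

/-! Writing `x = f/μ_f - 1`, `y = g/μ_g - 1`, one has `fg/(μ_f μ_g) - 1 = xy + x + y`.
Outside the four events where `|x|` or `|y|` exceeds `√(δ/3)` or `δ/3`, this gives
`|xy + x + y| ≤ δ/3 + δ/3 + δ/3`, and a union bound over those events finishes. -/

lemma abs_mul_sub_one_le (u v : ℝ) :
    |u * v - 1| ≤ |u - 1| * |v - 1| + |u - 1| + |v - 1| := by
  calc |u * v - 1| = |(u - 1) * (v - 1) + (u - 1) + (v - 1)| := by ring_nf
    _ ≤ |(u - 1) * (v - 1)| + |u - 1| + |v - 1| := abs_add_three _ _ _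
    _ = |u - 1| * |v - 1| + |u - 1| + |v - 1| := by rw [abs_mul]

lemma lt_abs_sub_one_of_lt_abs_mul_sub_one {u v δ s t : ℝ} (hs : 0 ≤ s)
    (hδ : s * s + 2 * t ≤ δ) (h : δ < |u * v - 1|) :
    s < |u - 1| ∨ s < |v - 1| ∨ t < |u - 1| ∨ t < |v - 1| := by
  by_contra! hc
  obtain ⟨hus, hvs, hut, hvt⟩ := hc
  have : |u - 1| * |v - 1| ≤ s * s := mul_le_mul hus hvs (abs_nonneg _) hs
  linarith [abs_mul_sub_one_le u v]

lemma measure_lt_abs_mul_sub_one_le {Ω : Type*} [MeasurableSpace Ω] (μ : Measure Ω)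
    (u v : Ω → ℝ) {δ s t : ℝ} (hs : 0 ≤ s) (hδ : s * s + 2 * t ≤ δ) :
    μ {ω | δ < |u ω * v ω - 1|} ≤
      μ {ω | s < |u ω - 1|} + μ {ω | s < |v ω - 1|} +
        μ {ω | t < |u ω - 1|} + μ {ω | t < |v ω - 1|} := by
  have hsub : {ω | δ < |u ω * v ω - 1|} ⊆
      {ω | s < |u ω - 1|} ∪ {ω | s < |v ω - 1|} ∪ {ω | t < |u ω - 1|} ∪
        {ω | t < |v ω - 1|} := by
    intro ω hω
    simpa only [Set.mem_union, Set.mem_ofPred_eq, or_assoc] using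
      lt_abs_sub_one_of_lt_abs_mul_sub_one hs hδ hω
  refine (measure_mono hsub).trans ?_
  refine (measure_union_le _ _).trans (add_le_add_left ?_ _)
  refine (measure_union_le _ _).trans (add_le_add_left ?_ _)
  exact measure_union_le _ _

theorem stmt_11_general {Ω : Type*} [MeasurableSpace Ω] (μ : Measure Ω)
    (f g : Ω → ℝ)
    (mf mg : ℝ)
    (εf εg : ℝ → NNReal)
    (hεf : ∀ δ : ℝ, 0 < δ → μ {ω | δ < |f ω / mf - 1|} ≤ (εf δ : ENNReal))
    (hεg : ∀ δ : ℝ, 0 < δ → μ {ω | δ < |g ω / mg - 1|} ≤ (εg δ : ENNReal)) :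
    ∀ δ : ℝ, 0 < δ →
      μ {ω | δ < |f ω * g ω / (mf * mg) - 1|} ≤
        (εf (Real.sqrt (δ / 3)) : ENNReal) + (εg (Real.sqrt (δ / 3)) : ENNReal) +
          (εf (δ / 3) : ENNReal) + (εg (δ / 3) : ENNReal) := by
  intro δ hδ
  have hδ3 : 0 < δ / 3 := by positivity
  have hsqrt : 0 < Real.sqrt (δ / 3) := Real.sqrt_pos.mpr hδ3
  have hsplit : Real.sqrt (δ / 3) * Real.sqrt (δ / 3) + 2 * (δ / 3) ≤ δ := by
    rw [Real.mul_self_sqrt hδ3.le]; linarith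
  simp_rw [mul_div_mul_comm]
  refine (measure_lt_abs_mul_sub_one_le μ (fun ω => f ω / mf) (fun ω => g ω / mg)
    hsqrt.le hsplit).trans ?_
  gcongr
  exacts [hεf _ hsqrt, hεg _ hsqrt, hεf _ hδ3, hεg _ hδ3]

/-- if on a probability space `f` concentrates around `μ_f ≠ 0` with
concentration function `ε_f` and `g` concentrates around `μ_g ≠ 0` with concentration
function `ε_g`, then the product `f g` concentrates around `μ_f μ_g`:
`μ {|fg/(μ_f μ_g) - 1| > δ} ≤ ε_f(√(δ/3)) + ε_g(√(δ/3)) + ε_f(δ/3) + ε_g(δ/3)`. -/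
theorem stmt_11 {Ω : Type*} [MeasurableSpace Ω] (μ : Measure Ω) [IsProbabilityMeasure μ]
    (f g : Ω → ℝ) (hf : Measurable f) (hg : Measurable g)
    (mf mg : ℝ) (hmf : mf ≠ 0) (hmg : mg ≠ 0)
    (εf εg : ℝ → NNReal)
    (hεf : ∀ δ : ℝ, 0 < δ → μ {ω | δ < |f ω / mf - 1|} ≤ (εf δ : ENNReal))
    (hεg : ∀ δ : ℝ, 0 < δ → μ {ω | δ < |g ω / mg - 1|} ≤ (εg δ : ENNReal)) :
    ∀ δ : ℝ, 0 < δ →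
      μ {ω | δ < |f ω * g ω / (mf * mg) - 1|} ≤
        (εf (Real.sqrt (δ / 3)) : ENNReal) + (εg (Real.sqrt (δ / 3)) : ENNReal) +
          (εf (δ / 3) : ENNReal) + (εg (δ / 3) : ENNReal) :=
  stmt_11_general μ f g mf mg εf εg hεf hεg
end
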